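/- For every x ∈ S, the principal left ideal of x in Σ equals (x)_ℓ^Γ ∪ Γ·(x)_ℓ^Γ, where (x)_ℓ^Γ = SΓx ∪ {x} is the principal left ideal of x in the Γ-semigroup S and Γ·(x)_ℓ^Γ = {γy : γ ∈ Γ, y ∈ (x)_ℓ^Γ} (elements viewed as irreducible words in Σ). -/
import Mathlib


open FreeSemigroup

section GammaSemigroup

variable {S Γ : Type}

/-- One-step rewriting on words over S ⊕ Γ. -/
inductive GStep (m : S → Γ → S → S) (γ₀ : Γ) : List (S ⊕ Γ) → List (S ⊕ Γ) → Prop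
  | gg (u v : List (S ⊕ Γ)) (γ₁ γ₂ : Γ) :
      GStep m γ₀ (u ++ Sum.inr γ₁ :: Sum.inr γ₂ :: v) (u ++ Sum.inr γ₁ :: v)
  | xgy (u v : List (S ⊕ Γ)) (x : S) (γ : Γ) (y : S) :
      GStep m γ₀ (u ++ Sum.inl x :: Sum.inr γ :: Sum.inl y :: v) (u ++ Sum.inl (m x γ y) :: v)
  | xy (u v : List (S ⊕ Γ)) (x y : S) :
      GStep m γ₀ (u ++ Sum.inl x :: Sum.inl y :: v) (u ++ Sum.inl (m x γ₀ y) :: v)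

/-- The defining relations on the free semigroup on S ⊕ Γ. -/
def GRel (m : S → Γ → S → S) (γ₀ : Γ) :
    FreeSemigroup (S ⊕ Γ) → FreeSemigroup (S ⊕ Γ) → Prop :=
  fun a b =>
    (∃ γ₁ γ₂ : Γ, a = of (Sum.inr γ₁) * of (Sum.inr γ₂) ∧ b = of (Sum.inr γ₁)) ∨
    (∃ (x y : S) (γ : Γ), a = of (Sum.inl x) * of (Sum.inr γ) * of (Sum.inl y) ∧
      b = of (Sum.inl (m x γ y))) ∨
    (∃ x y : S, a = of (Sum.inl x) * of (Sum.inl y) ∧ b = of (Sum.inl (m x γ₀ y)))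

/-- The congruence generated by the defining relations. -/
def GCon (m : S → Γ → S → S) (γ₀ : Γ) : Con (FreeSemigroup (S ⊕ Γ)) := conGen (GRel m γ₀)

/-- The universal semigroup Σ of the Γ-semigroup S. -/
abbrev USem (m : S → Γ → S → S) (γ₀ : Γ) := (GCon m γ₀).Quotient

/-- The canonical map μ : S → Σ. -/
def gmu (m : S → Γ → S → S) (γ₀ : Γ) (x : S) : USem m γ₀ :=
  ((of (Sum.inl x) : FreeSemigroup (S ⊕ Γ)) : (GCon m γ₀).Quotient)

/-- The canonical map Γ → Σ. -/
def giota (m : S → Γ → S → S) (γ₀ : Γ) (γ : Γ) : USem m γ₀ :=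
  ((of (Sum.inr γ) : FreeSemigroup (S ⊕ Γ)) : (GCon m γ₀).Quotient)

/-- Principal left ideal of an element of a semigroup. -/
def pLeft {T : Type} [Semigroup T] (a : T) : Set T := {w | ∃ t : T, w = t * a} ∪ {a}

/-- Principal right ideal of an element of a semigroup. -/
def pRight {T : Type} [Semigroup T] (a : T) : Set T := {w | ∃ t : T, w = a * t} ∪ {a}

/-- Principal left ideal in the Γ-semigroup: SΓx ∪ {x}. -/
def pLeftG (m : S → Γ → S → S) (x : S) : Set S := {y | ∃ (s : S) (γ : Γ), y = m s γ x} ∪ {x}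

/-- Principal right ideal in the Γ-semigroup: xΓS ∪ {x}. -/
def pRightG (m : S → Γ → S → S) (x : S) : Set S := {y | ∃ (γ : Γ) (s : S), y = m x γ s} ∪ {x}

/-- Green's H relation on the Γ-semigroup. -/
def HrelG (m : S → Γ → S → S) (a b : S) : Prop := pLeftG m a = pLeftG m b ∧ pRightG m a = pRightG m b

/-- S_δ is a simple semigroup: its only two-sided ideal is S itself. -/
def SimpleAt (m : S → Γ → S → S) (δ : Γ) : Prop :=
  ∀ J : Set S, J.Nonempty → (∀ t : S, ∀ j ∈ J, m t δ j ∈ J ∧ m j δ t ∈ J) → J = Set.univ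

/-- e is an idempotent of S_δ. -/
def IdemAt (m : S → Γ → S → S) (δ : Γ) (e : S) : Prop := m e δ e = e

/-- e is a primitive idempotent of S_δ. -/
def PrimAt (m : S → Γ → S → S) (δ : Γ) (e : S) : Prop :=
  IdemAt m δ e ∧ ∀ f, IdemAt m δ f → m e δ f = f → m f δ e = f → f = e

/-- S_δ is completely simple. -/
def CSimpleAt (m : S → Γ → S → S) (δ : Γ) : Prop := SimpleAt m δ ∧ ∃ e, PrimAt m δ e

/-- S_δ has no zero element. -/
def NoZeroAt (m : S → Γ → S → S) (δ : Γ) : Prop := ¬ ∃ z : S, ∀ t : S, m z δ t = z ∧ m t δ z = z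

/-- L is a left ideal of S_δ. -/
def LIdealAt (m : S → Γ → S → S) (δ : Γ) (L : Set S) : Prop :=
  L.Nonempty ∧ ∀ t : S, ∀ l ∈ L, m t δ l ∈ L

/-- L is a minimal left ideal of S_δ. -/
def MinLIdealAt (m : S → Γ → S → S) (δ : Γ) (L : Set S) : Prop :=
  LIdealAt m δ L ∧ ∀ L' ⊆ L, LIdealAt m δ L' → L' = L

/-- S_δ is a group. -/
def GroupAt (m : S → Γ → S → S) (δ : Γ) : Prop :=
  ∃ e : S, (∀ a, m e δ a = a ∧ m a δ e = a) ∧ ∀ a, ∃ b, m a δ b = e ∧ m b δ a = e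

/-- G is a subgroup (a sub-semigroup that is a group) of the semigroup T. -/
def IsSubgroupOf {T : Type} [Semigroup T] (G : Set T) : Prop :=
  (∀ a ∈ G, ∀ b ∈ G, a * b ∈ G) ∧
  ∃ e ∈ G, (∀ g ∈ G, e * g = g ∧ g * e = g) ∧ ∀ g ∈ G, ∃ h ∈ G, g * h = e ∧ h * g = e

/-- The set Σ' = Σ \ Γ. -/
def USem' (m : S → Γ → S → S) (γ₀ : Γ) : Set (USem m γ₀) := {w | ¬ ∃ γ : Γ, w = giota m γ₀ γ}

end GammaSemigroup

section Aux

variable {S Γ : Type} (m : S → Γ → S → S) (γ₀ : Γ)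

lemma rel_gg (γ₁ γ₂ : Γ) : giota m γ₀ γ₁ * giota m γ₀ γ₂ = giota m γ₀ γ₁ := by
  show ((of (Sum.inr γ₁) * of (Sum.inr γ₂) : FreeSemigroup (S ⊕ Γ)) : (GCon m γ₀).Quotient)
      = ((of (Sum.inr γ₁) : FreeSemigroup (S ⊕ Γ)) : (GCon m γ₀).Quotient)
  exact (Con.eq _).mpr (ConGen.Rel.of _ _ (Or.inl ⟨γ₁, γ₂, rfl, rfl⟩))

lemma rel_xgy (x : S) (γ : Γ) (y : S) :
    gmu m γ₀ x * giota m γ₀ γ * gmu m γ₀ y = gmu m γ₀ (m x γ y) := by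
  show ((of (Sum.inl x) * of (Sum.inr γ) * of (Sum.inl y) :
      FreeSemigroup (S ⊕ Γ)) : (GCon m γ₀).Quotient) = _
  exact (Con.eq _).mpr (ConGen.Rel.of _ _ (Or.inr (Or.inl ⟨x, y, γ, rfl, rfl⟩)))

lemma rel_xy (x y : S) : gmu m γ₀ x * gmu m γ₀ y = gmu m γ₀ (m x γ₀ y) := by
  show ((of (Sum.inl x) * of (Sum.inl y) :
      FreeSemigroup (S ⊕ Γ)) : (GCon m γ₀).Quotient) = _
  exact (Con.eq _).mpr (ConGen.Rel.of _ _ (Or.inr (Or.inr ⟨x, y, rfl, rfl⟩)))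

/-- Normal forms in Σ. -/
def NF (w : USem m γ₀) : Prop :=
  (∃ γ, w = giota m γ₀ γ) ∨ (∃ s, w = gmu m γ₀ s) ∨
  (∃ γ s, w = giota m γ₀ γ * gmu m γ₀ s) ∨
  (∃ s γ, w = gmu m γ₀ s * giota m γ₀ γ) ∨
  (∃ γ₁ s γ₂, w = giota m γ₀ γ₁ * gmu m γ₀ s * giota m γ₀ γ₂)

lemma nf_gen_mul (a : S ⊕ Γ) (b : USem m γ₀) (hb : NF m γ₀ b) :
    NF m γ₀ (((of a : FreeSemigroup (S ⊕ Γ)) : (GCon m γ₀).Quotient) * b) := by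
  rcases a with s | γ
  · -- generator is gmu m γ₀ s
    have hs : ((of (Sum.inl s) : FreeSemigroup (S ⊕ Γ)) : (GCon m γ₀).Quotient)
        = gmu m γ₀ s := rfl
    rw [hs]
    rcases hb with ⟨γ, rfl⟩ | ⟨t, rfl⟩ | ⟨γ, t, rfl⟩ | ⟨t, γ, rfl⟩ | ⟨γ₁, t, γ₂, rfl⟩
    · exact Or.inr (Or.inr (Or.inr (Or.inl ⟨s, γ, rfl⟩)))
    · exact Or.inr (Or.inl ⟨m s γ₀ t, rel_xy m γ₀ s t⟩)
    · refine Or.inr (Or.inl ⟨m s γ t, ?_⟩)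
      rw [← mul_assoc, rel_xgy]
    · refine Or.inr (Or.inr (Or.inr (Or.inl ⟨m s γ₀ t, γ, ?_⟩)))
      rw [← mul_assoc, rel_xy]
    · refine Or.inr (Or.inr (Or.inr (Or.inl ⟨m s γ₁ t, γ₂, ?_⟩)))
      rw [← mul_assoc, ← mul_assoc, rel_xgy]
  · have hg : ((of (Sum.inr γ) : FreeSemigroup (S ⊕ Γ)) : (GCon m γ₀).Quotient)
        = giota m γ₀ γ := rfl
    rw [hg]
    rcases hb with ⟨γ', rfl⟩ | ⟨t, rfl⟩ | ⟨γ', t, rfl⟩ | ⟨t, γ', rfl⟩ | ⟨γ₁, t, γ₂, rfl⟩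
    · exact Or.inl ⟨γ, rel_gg m γ₀ γ γ'⟩
    · exact Or.inr (Or.inr (Or.inl ⟨γ, t, rfl⟩))
    · refine Or.inr (Or.inr (Or.inl ⟨γ, t, ?_⟩))
      rw [← mul_assoc, rel_gg]
    · exact Or.inr (Or.inr (Or.inr (Or.inr ⟨γ, t, γ', (mul_assoc _ _ _).symm⟩)))
    · refine Or.inr (Or.inr (Or.inr (Or.inr ⟨γ, t, γ₂, ?_⟩)))
      rw [← mul_assoc, ← mul_assoc, rel_gg]

lemma nf_all (w : USem m γ₀) : NF m γ₀ w := by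
  induction w using Con.induction_on with
  | H a =>
    induction a using FreeSemigroup.recOnMul with
    | ih1 a =>
      have := nf_gen_mul m γ₀ a
      rcases a with s | γ
      · exact Or.inr (Or.inl ⟨s, rfl⟩)
      · exact Or.inl ⟨γ, rfl⟩
    | ih2 a b _ hb =>
      have : ((of a * b : FreeSemigroup (S ⊕ Γ)) : (GCon m γ₀).Quotient)
          = ((of a : FreeSemigroup (S ⊕ Γ)) : (GCon m γ₀).Quotient) * (b : (GCon m γ₀).Quotient) := rfl
      rw [this]
      exact nf_gen_mul m γ₀ a _ hb

end Aux

theorem stmt (S Γ : Type) [Nonempty S] [Nonempty Γ] (m : S → Γ → S → S)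
    (assoc : ∀ (a b c : S) (α β : Γ), m (m a α b) β c = m a α (m b β c)) (γ₀ : Γ) (x : S) :
    pLeft (gmu m γ₀ x) =
      gmu m γ₀ '' pLeftG m x ∪
        {w | ∃ γ : Γ, ∃ y ∈ pLeftG m x, w = giota m γ₀ γ * gmu m γ₀ y} := by
  ext w
  constructor
  · rintro (⟨t, rfl⟩ | hw)
    · rcases nf_all m γ₀ t with ⟨γ, rfl⟩ | ⟨s, rfl⟩ | ⟨γ, s, rfl⟩ | ⟨s, γ, rfl⟩ | ⟨γ₁, s, γ₂, rfl⟩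
      · exact Or.inr ⟨γ, x, Or.inr rfl, rfl⟩
      · exact Or.inl ⟨m s γ₀ x, Or.inl ⟨s, γ₀, rfl⟩, (rel_xy m γ₀ s x).symm⟩
      · refine Or.inr ⟨γ, m s γ₀ x, Or.inl ⟨s, γ₀, rfl⟩, ?_⟩
        rw [mul_assoc, rel_xy]
      · exact Or.inl ⟨m s γ x, Or.inl ⟨s, γ, rfl⟩, (rel_xgy m γ₀ s γ x).symm⟩
      · refine Or.inr ⟨γ₁, m s γ₂ x, Or.inl ⟨s, γ₂, rfl⟩, ?_⟩
        rw [mul_assoc, mul_assoc, ← mul_assoc (gmu m γ₀ s), rel_xgy]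
    · -- w = gmu m γ₀ x
      have hw' : w = gmu m γ₀ x := hw
      exact Or.inl ⟨x, Or.inr rfl, hw'.symm⟩
  · rintro (⟨y, (⟨s, γ, rfl⟩ | rfl), rfl⟩ | ⟨γ, y, (⟨s, γ', rfl⟩ | rfl), rfl⟩)
    · exact Or.inl ⟨gmu m γ₀ s * giota m γ₀ γ, (rel_xgy m γ₀ s γ x).symm⟩
    · exact Or.inr rfl
    · refine Or.inl ⟨giota m γ₀ γ * gmu m γ₀ s * giota m γ₀ γ', ?_⟩
      rw [mul_assoc, mul_assoc, ← mul_assoc (gmu m γ₀ s), rel_xgy]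
    · exact Or.inl ⟨giota m γ₀ γ, rfl⟩
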